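/- Let G be an infinitely edge-connected graph and S a set of oriented unitary compound-separations of G whose separators are pairwise distinct, such that the relation ≤ on oriented separations linearly orders S and (S, ≤) is order-isomorphic to (ℚ, ≤). Then the halved Farey graph is strongly immersed in G. -/

import Mathlib

open SimpleGraph

/-- Two walks (with arbitrary endpoints) are edge-disjoint. -/
def EdgeDisjW {V : Type*} {G : SimpleGraph V} {a b c d : V}
    (p : G.Walk a b) (q : G.Walk c d) : Prop :=
  ∀ e, e ∈ p.edges → e ∉ q.edges

/-- A graph is infinitely edge-connected: it has at least two vertices and
between any two distinct vertices there are infinitely many pairwise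
edge-disjoint paths. -/
def InfEdgeConn {V : Type*} (G : SimpleGraph V) : Prop :=
  (∃ u v : V, u ≠ v) ∧
    ∀ u v : V, u ≠ v →
      ∃ P : ℕ → G.Walk u v,
        (∀ n, (P n).IsPath) ∧ ∀ m n, m ≠ n → EdgeDisjW (P m) (P n)

/-- Infinite edge-connectivity of the subgraph spanned by a vertex set `S`
(used for graphs of the form "union of a family of paths", whose abstract
vertex set is `S`). -/
def InfEdgeConnOn {V : Type*} (G : SimpleGraph V) (S : Set V) : Prop :=
  (∃ u ∈ S, ∃ v ∈ S, u ≠ v) ∧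
    ∀ u ∈ S, ∀ v ∈ S, u ≠ v →
      ∃ P : ℕ → G.Walk u v,
        (∀ n, (P n).IsPath) ∧ ∀ m n, m ≠ n → EdgeDisjW (P m) (P n)

/-- `α` together with the family of paths `P` (one for each edge of `H`)
is a strong immersion of `H` in `G`. -/
def IsStrongImmersion {VH VG : Type*} (H : SimpleGraph VH) (G : SimpleGraph VG)
    (α : VH → VG) (P : ∀ ⦃u v : VH⦄, H.Adj u v → G.Walk (α u) (α v)) : Prop :=
  Function.Injective α ∧
  (∀ ⦃u v : VH⦄ (h : H.Adj u v), (P h).IsPath) ∧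
  (∀ ⦃u v u' v' : VH⦄ (h : H.Adj u v) (h' : H.Adj u' v'),
      s(u, v) ≠ s(u', v') → EdgeDisjW (P h) (P h')) ∧
  (∀ ⦃u v : VH⦄ (h : H.Adj u v), ∀ w ∈ (P h).support,
      (∃ z, α z = w) → w = α u ∨ w = α v)

/-- `H` is strongly immersed in `G`. -/
def StronglyImmersed {VH VG : Type*} (H : SimpleGraph VH) (G : SimpleGraph VG) : Prop :=
  ∃ α P, IsStrongImmersion H G α P

/-- `β` together with the family of paths `P` witnesses that `G` contains
a subdivision of `H`: the paths are internally disjoint and have no internal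
vertex among the branch vertices. -/
def IsSubdivision {VH VG : Type*} (H : SimpleGraph VH) (G : SimpleGraph VG)
    (β : VH → VG) (P : ∀ ⦃u v : VH⦄, H.Adj u v → G.Walk (β u) (β v)) : Prop :=
  Function.Injective β ∧
  (∀ ⦃u v : VH⦄ (h : H.Adj u v), (P h).IsPath) ∧
  (∀ ⦃u v u' v' : VH⦄ (h : H.Adj u v) (h' : H.Adj u' v'),
      s(u, v) ≠ s(u', v') → ∀ w, w ∈ (P h).support → w ∈ (P h').support →
        (w = β u ∨ w = β v) ∧ (w = β u' ∨ w = β v')) ∧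
  (∀ ⦃u v : VH⦄ (h : H.Adj u v), ∀ w ∈ (P h).support,
      (∃ z, β z = w) → w = β u ∨ w = β v)

/-- `H` is a topological minor of `G`. -/
def TopMinor {VH VG : Type*} (H : SimpleGraph VH) (G : SimpleGraph VG) : Prop :=
  ∃ β P, IsSubdivision H G β P

/-- The dyadic rationals of the unit interval: the vertices of the halved
Farey graph. -/
def DyadicSet : Set ℚ := {q | ∃ n k : ℕ, k ≤ 2 ^ n ∧ q = (k : ℚ) / 2 ^ n}

/-- The halved Farey graph: two dyadic rationals of `[0,1]` are adjacent iff
they are of the form `k/2^n` and `(k+1)/2^n`. -/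
def halvedFarey : SimpleGraph DyadicSet where
  Adj a b := a ≠ b ∧ ∃ n k : ℕ, k + 1 ≤ 2 ^ n ∧
    ((a.1 = (k : ℚ) / 2 ^ n ∧ b.1 = ((k : ℚ) + 1) / 2 ^ n) ∨
     (b.1 = (k : ℚ) / 2 ^ n ∧ a.1 = ((k : ℚ) + 1) / 2 ^ n))
  symm := by
    constructor
    rintro a b ⟨hne, n, k, hk, h⟩
    exact ⟨hne.symm, n, k, hk, h.symm⟩
  loopless := by constructor; rintro a ⟨hne, -⟩; exact hne rfl

/-- Adjacency in the Farey graph on `ℚ ∪ {∞}` (`none` is `∞ = ±1/0`). -/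
def fareyAdj : Option ℚ → Option ℚ → Prop
  | some q, some r =>
      q.num * (r.den : ℤ) - r.num * (q.den : ℤ) = 1 ∨
      q.num * (r.den : ℤ) - r.num * (q.den : ℤ) = -1
  | some q, none => q.den = 1
  | none, some r => r.den = 1
  | none, none => False

/-- The Farey graph. -/
def fareyGraph : SimpleGraph (Option ℚ) where
  Adj := fareyAdj
  symm := by
    constructor
    rintro (_ | q) (_ | r) h <;> simp only [fareyAdj] at * <;> omega
  loopless := by
    constructor
    rintro (_ | q) h <;> simp only [fareyAdj] at h <;> omega
/-- `u` occurs strictly before `v` on the list `l`. -/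
def Before {V : Type*} (l : List V) (u v : V) : Prop := List.Sublist [u, v] l

/-- `l` is the (consecutive) portion of the list `R` starting at `u` and
ending at `v`. -/
def IsPortion {V : Type*} (R : List V) (u v : V) (l : List V) : Prop :=
  (∃ pre post, R = pre ++ l ++ post) ∧ l.head? = some u ∧ l.getLast? = some v

/-- The union of a family of walks, as a graph on the ambient vertex set
(its abstract vertex set is `walkSupp P`). -/
def walkUnion {V : Type*} {G : SimpleGraph V} {x y : V}
    (P : ℕ → G.Walk x y) : SimpleGraph V where
  Adj u v := ∃ n, s(u, v) ∈ (P n).edges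
  symm := by
    constructor
    rintro u v ⟨n, h⟩
    exact ⟨n, by rwa [Sym2.eq_swap]⟩
  loopless := by
    constructor
    rintro v ⟨n, h⟩
    exact G.irrefl ((P n).edges_subset_edgeSet h)

/-- The vertices appearing on some walk of the family. -/
def walkSupp {V : Type*} {G : SimpleGraph V} {x y : V}
    (P : ℕ → G.Walk x y) : Set V := {v | ∃ n, v ∈ (P n).support}

/-- An `x`–`y` grain line in `G`. -/
structure GrainLine {V : Type*} (G : SimpleGraph V) (x y : V) where
  ne_xy : x ≠ y
  /-- The limit set `L`. -/
  L : Set V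
  /-- The linear order `≤_L` on `L`. -/
  le : V → V → Prop
  /-- The pairwise edge-disjoint `x`–`y` paths. -/
  P : ℕ → G.Walk x y
  isPath : ∀ n, (P n).IsPath
  edgeDisj : ∀ m n, m ≠ n → EdgeDisjW (P m) (P n)
  le_refl : ∀ v ∈ L, le v v
  le_trans : ∀ u ∈ L, ∀ v ∈ L, ∀ w ∈ L, le u v → le v w → le u w
  le_antisymm : ∀ u ∈ L, ∀ v ∈ L, le u v → le v u → u = v
  le_total : ∀ u ∈ L, ∀ v ∈ L, le u v ∨ le v u
  x_mem : x ∈ L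
  y_mem : y ∈ L
  x_min : ∀ v ∈ L, le x v
  y_max : ∀ v ∈ L, le v y
  /-- (GL1): `L` is the set of vertices lying on a final segment of the paths. -/
  gl1 : ∀ v : V, v ∈ L ↔ ∃ N : ℕ, ∀ n : ℕ, v ∈ (P n).support ↔ N ≤ n
  /-- (GL2): a vertex of some path not in `L` lies on no other path. -/
  gl2 : ∀ n : ℕ, ∀ v ∈ (P n).support, v ∉ L → ∀ m : ℕ, m ≠ n → v ∉ (P m).support
  /-- (GL3): for `n ≥ 1`, the path `P n` traverses the vertices of `L_{<n}`
  in the order given by `≤_L`. -/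
  gl3 : ∀ n : ℕ, 1 ≤ n → ∀ u v : V, u ∈ L → v ∈ L →
      (∃ m < n, u ∈ (P m).support) → (∃ m < n, v ∈ (P m).support) →
      u ≠ v → (le u v ↔ Before (P n).support u v)

namespace GrainLine

variable {V : Type*} {G : SimpleGraph V} {x y : V}

/-- The graph `⋃𝒫` defined by the grain line. -/
def union (gl : GrainLine G x y) : SimpleGraph V := walkUnion gl.P

/-- The vertex set of `⋃𝒫`. -/
def supp (gl : GrainLine G x y) : Set V := walkSupp gl.P

/-- The set `L_{<n}` of vertices of `L` of depth `< n`. -/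
def Llt (gl : GrainLine G x y) (n : ℕ) : Set V :=
  {v | v ∈ gl.L ∧ ∃ m < n, v ∈ (gl.P m).support}

/-- The `𝒫`-depth of a vertex. -/
noncomputable def vDepth (gl : GrainLine G x y) (v : V) : ℕ :=
  sInf {n | v ∈ (gl.P n).support}

/-- The `𝒫`-depth of an edge. -/
noncomputable def eDepth (gl : GrainLine G x y) (e : Sym2 V) : ℕ :=
  sInf {n | e ∈ (gl.P n).edges}

/-- `u` and `v` are the ends of a `𝒫`-segment of depth `d`: both lie in
`L_{<d}` and `v` is the successor of `u` in `(L_{<d}, ≤_L)`. -/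
def IsSegEnds (gl : GrainLine G x y) (d : ℕ) (u v : V) : Prop :=
  u ∈ gl.Llt d ∧ v ∈ gl.Llt d ∧ u ≠ v ∧ gl.le u v ∧
    ∀ z ∈ gl.Llt d, gl.le u z → gl.le z v → z = u ∨ z = v

/-- The grain line is well-structured: every vertex of a `𝒫`-segment
`u P_d v` lying in `L` belongs to the interval `[u,v]` of `(L, ≤_L)`. -/
def WellStructured (gl : GrainLine G x y) : Prop :=
  ∀ d u v, gl.IsSegEnds d u v →
    ∀ w ∈ gl.L, (w = u ∨ w = v ∨ List.Sublist [u, w, v] (gl.P d).support) →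
      gl.le u w ∧ gl.le w v

/-- The grain line is free: the graph `⋃𝒫` it defines is infinitely
edge-connected. -/
def Free (gl : GrainLine G x y) : Prop := InfEdgeConnOn gl.union gl.supp

/-- The grain line is wildly presented. -/
def WildlyPresented (gl : GrainLine G x y) : Prop :=
  ∀ n : ℕ, 1 ≤ n → ∀ u v : V, u ∈ gl.Llt n → v ∈ gl.Llt n → u ≠ v → gl.le u v →
    ∃ w ∈ gl.L, w ≠ u ∧ w ≠ v ∧ gl.le u w ∧ gl.le w v ∧
      List.Sublist [u, w, v] (gl.P n).support

end GrainLine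

/-- `G` is a generalised halved Farey graph: it is defined by a grain line
satisfying (GL2') and (GL3'). -/
def IsGenHalvedFarey {V : Type*} (G : SimpleGraph V) : Prop :=
  ∃ (x y : V) (gl : GrainLine G x y),
    (∀ v : V, v ∈ gl.L) ∧
    (∀ u v : V, gl.le u v ↔ (u = v ∨ ∃ n, Before (gl.P n).support u v)) ∧
    (∀ u v : V, G.Adj u v ↔ ∃ n, s(u, v) ∈ (gl.P n).edges)
/-- `{A, B}` is a compound-separation of `G`. -/
def IsCompoundSep {V : Type*} (G : SimpleGraph V) (A B : Set V) : Prop :=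
  A ∪ B = Set.univ ∧ (A \ B).Nonempty ∧ (B \ A).Nonempty ∧ (A ∩ B).Finite ∧
    {p : V × V | G.Adj p.1 p.2 ∧ p.1 ∈ A \ B ∧ p.2 ∈ B \ A}.Finite

/-- The separation `{A, B}` separates the vertices `u` and `v`. -/
def SepPair {V : Type*} (A B : Set V) (u v : V) : Prop :=
  (u ∈ A \ B ∧ v ∈ B \ A) ∨ (u ∈ B \ A ∧ v ∈ A \ B)

/-- The compound-separation `{A, B}` separates `u` and `v` minimally. -/
def MinSeps {V : Type*} (G : SimpleGraph V) (A B : Set V) (u v : V) : Prop :=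
  SepPair A B u v ∧
    ∀ C D : Set V, IsCompoundSep G C D → C ∩ D ⊂ A ∩ B → ¬ SepPair C D u v

/-- `{A, B}` is a unitary compound-separation of `G` with separator `w`. -/
def IsUnitaryCSep {V : Type*} (G : SimpleGraph V) (A B : Set V) (w : V) : Prop :=
  IsCompoundSep G A B ∧ A ∩ B = {w}

/-- `w` is a compound-cutvertex of `G`. -/
def IsCompoundCutvertex {V : Type*} (G : SimpleGraph V) (w : V) : Prop :=
  ∃ A B, IsUnitaryCSep G A B w

/-- `G` is `k`-compound-connected: no compound-separation of order `< k`
separates any two vertices. -/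
def kCompConn {V : Type*} (G : SimpleGraph V) (k : ℕ) : Prop :=
  ∀ A B : Set V, IsCompoundSep G A B → (A ∩ B).ncard < k →
    ∀ u v : V, ¬ SepPair A B u v

/-- `u` and `v` cannot be separated by deleting finitely many edges. -/
def FinEdgeConn {V : Type*} (G : SimpleGraph V) (u v : V) : Prop :=
  ∀ F : Set (Sym2 V), F.Finite → (G.deleteEdges F).Reachable u v

/-- `G` is a Π-graph: it is infinitely edge-connected but has no two vertices
linked by infinitely many pairwise internally disjoint paths. -/
def PiGraph {V : Type*} (G : SimpleGraph V) : Prop :=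
  InfEdgeConn G ∧
    ∀ u v : V, u ≠ v →
      ¬ ∃ P : ℕ → G.Walk u v, (∀ n, (P n).IsPath) ∧
          ∀ m n, m ≠ n → ∀ w ∈ (P m).support, w ∈ (P n).support → w = u ∨ w = v

/-- `H` is a `k`-bounded minor of `G`: there are disjoint nonempty connected
branch sets of size `< k`. -/
def IsBddMinor {VH VG : Type*} (H : SimpleGraph VH) (G : SimpleGraph VG) (k : ℕ) : Prop :=
  ∃ B : VH → Set VG,
    (∀ h, (B h).Nonempty) ∧
    (∀ h, (B h).Finite ∧ (B h).ncard < k) ∧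
    (∀ h h', h ≠ h' → Disjoint (B h) (B h')) ∧
    (∀ h, (G.induce (B h)).Connected) ∧
    (∀ h h', H.Adj h h' → ∃ a ∈ B h, ∃ b ∈ B h', G.Adj a b)

/-- The order on oriented separations: `(A,B) ≤ (C,D)` iff `A ⊆ C` and `D ⊆ B`. -/
def osLE {V : Type*} (s t : Set V × Set V) : Prop := s.1 ⊆ t.1 ∧ t.2 ⊆ s.2

/-- The reverse orientation of an oriented separation. -/
def swapSep {V : Type*} (s : Set V × Set V) : Set V × Set V := (s.2, s.1)

/-- Two (unordered) separations, given by representative orientations, are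
nested: they have comparable orientations. -/
def NestedSep {V : Type*} (s t : Set V × Set V) : Prop :=
  osLE s t ∨ osLE t s ∨ osLE s (swapSep t) ∨ osLE (swapSep s) t

/-- `σ` is an orientation of the set `N` of separations which is a star. -/
def IsStarOrientation {V : Type*} (N σ : Set (Set V × Set V)) : Prop :=
  (∀ s ∈ N, s ∈ σ ∨ swapSep s ∈ σ) ∧
  (∀ s ∈ N, ¬ (s ∈ σ ∧ swapSep s ∈ σ)) ∧
  (∀ t ∈ σ, t ∈ N ∨ swapSep t ∈ N) ∧
  (∀ s ∈ σ, ∀ t ∈ σ, s ≠ t → osLE s (swapSep t))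

/-- The set `N` of unitary compound-separations is faithful to the
compound-cutvertex `w` in `G`. -/
def FaithfulToVert {V : Type*} (G : SimpleGraph V) (N : Set (Set V × Set V)) (w : V) : Prop :=
  (∃ σ, IsStarOrientation {s ∈ N | s.1 ∩ s.2 = {w}} σ) ∧
  ∀ u v : V, (∃ A B, IsUnitaryCSep G A B w ∧ SepPair A B u v) →
    ∃ s ∈ N, s.1 ∩ s.2 = {w} ∧ SepPair s.1 s.2 u v

/-- The set `N` of unitary compound-separations is faithful to `G`. -/
def FaithfulSet {V : Type*} (G : SimpleGraph V) (N : Set (Set V × Set V)) : Prop :=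
  ∀ w : V, IsCompoundCutvertex G w → FaithfulToVert G N w

/-- A set of graphs is typical for the class of infinitely edge-connected
graphs with regard to the topological minor relation. -/
def TypicalTopMinor (𝓗 : Set (Σ V : Type, SimpleGraph V)) : Prop :=
  ∀ (W : Type) (G : SimpleGraph W), InfEdgeConn G → ∃ H ∈ 𝓗, TopMinor H.2 G


/-!
Write `w q` for the separator of the separation indexed by `q ∈ ℚ`. If `m` lies outside the
interval spanned by `a` and `b`, some separation of the chain indexed between them has `w m`
strictly on one side and `w a`, `w b` strictly on the other. A path meets that separator at most
once, so every `w a`–`w b` path through `w m` uses one of the finitely many edges across the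
separation. Hence all but finitely many of the infinitely many edge-disjoint `w a`–`w b` paths
avoid any given finite set of such vertices and any given finite set of edges.

The immersion is built level by level. The dyadics of level `n + 1` are sent to separators
indexed between the images of their two neighbours of level `n`, chosen off all the paths built
so far; then the new edges of the level are realised one after the other by paths avoiding all
earlier edges and the other branch vertices of the level.
-/

namespace SimpleGraph

variable {V : Type*} {G : SimpleGraph V}

def FinitelyBlocked (G : SimpleGraph V) (u v z : V) : Prop :=
  ∃ C : Set (Sym2 V), C.Finite ∧
    ∀ p : G.Walk u v, p.IsPath → z ∈ p.support → ∃ e ∈ p.edges, e ∈ C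

lemma Walk.exists_of_sym2_eq {a b a' b' : V} (h : s(a, b) = s(a', b')) (p : G.Walk a b) :
    ∃ q : G.Walk a' b', (p.IsPath → q.IsPath) ∧ q.edges ⊆ p.edges ∧ q.support ⊆ p.support := by
  rcases Sym2.eq_iff.mp h with ⟨rfl, rfl⟩ | ⟨rfl, rfl⟩
  · exact ⟨p, id, fun _ => id, fun _ => id⟩
  · exact ⟨p.reverse, Walk.IsPath.reverse, fun e => by simp, fun x => by simp⟩

lemma Walk.IsPath.eq_of_mem_takeUntil_of_mem_dropUntil [DecidableEq V] {u v z x : V}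
    {p : G.Walk u v} (hp : p.IsPath) (hz : z ∈ p.support)
    (h₁ : x ∈ (p.takeUntil z hz).support) (h₂ : x ∈ (p.dropUntil z hz).support) : x = z := by
  have hnd := hp.support_nodup
  rw [← p.take_spec hz, Walk.support_append] at hnd
  by_contra hxz
  rw [← Walk.cons_tail_support] at h₂
  exact List.disjoint_of_nodup_append hnd h₁ ((List.mem_cons.mp h₂).resolve_left hxz)

lemma finite_setOf_edges_meet {u v : V} {P : ℕ → G.Walk u v}
    (hP : ∀ m n, m ≠ n → EdgeDisjW (P m) (P n)) {C : Set (Sym2 V)} (hC : C.Finite) :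
    {n | ∃ e ∈ (P n).edges, e ∈ C}.Finite := by
  refine (hC.biUnion fun e _ => Set.Subsingleton.finite (s := {n | e ∈ (P n).edges}) ?_).subset ?_
  · intro m hm n hn
    by_contra hmn
    exact hP m n hmn e hm hn
  · rintro n ⟨e, hn, he⟩
    exact Set.mem_biUnion he hn

end SimpleGraph

section

variable {V : Type*} {G : SimpleGraph V}

lemma EdgeDisjW.symm {a b c d : V} {p : G.Walk a b} {q : G.Walk c d} (h : EdgeDisjW p q) :
    EdgeDisjW q p :=
  fun e hq hp => h e hp hq

lemma InfEdgeConn.preconnected (hG : InfEdgeConn G) : G.Preconnected := by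
  intro u v
  by_cases huv : u = v
  · exact huv ▸ Reachable.refl u
  · exact ⟨(hG.2 u v huv).choose 0⟩

lemma InfEdgeConn.exists_path_avoiding (hG : InfEdgeConn G) {u v : V} (huv : u ≠ v)
    {E₀ : Set (Sym2 V)} (hE₀ : E₀.Finite) {W : Set V} (hW : W.Finite)
    (hblock : ∀ z ∈ W, G.FinitelyBlocked u v z) :
    ∃ p : G.Walk u v, p.IsPath ∧ (∀ e ∈ p.edges, e ∉ E₀) ∧ ∀ z ∈ W, z ∉ p.support := by
  obtain ⟨P, hpath, hdisj⟩ := hG.2 u v huv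
  have hbad : ({n | ∃ e ∈ (P n).edges, e ∈ E₀} ∪ ⋃ z ∈ W, {n | z ∈ (P n).support}).Finite := by
    refine (finite_setOf_edges_meet hdisj hE₀).union (hW.biUnion fun z hz => ?_)
    obtain ⟨C, hC, hcross⟩ := hblock z hz
    exact (finite_setOf_edges_meet hdisj hC).subset fun n hn => hcross (P n) (hpath n) hn
  obtain ⟨n, hn⟩ := hbad.exists_notMem
  simp only [Set.mem_union, Set.mem_ofPred_eq, Set.mem_iUnion, not_or, not_exists] at hn
  exact ⟨P n, hpath n, fun e he he₀ => hn.1 e ⟨he, he₀⟩, fun z hz hzn => hn.2 z hz hzn⟩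

lemma InfEdgeConn.exists_paths_avoiding {ι : Type*} [DecidableEq ι] (hG : InfEdgeConn G)
    (s : Finset ι) {a b : ι → V} (hab : ∀ i ∈ s, a i ≠ b i)
    {E₀ : Set (Sym2 V)} (hE₀ : E₀.Finite) {W : ι → Set V} (hW : ∀ i ∈ s, (W i).Finite)
    (hblock : ∀ i ∈ s, ∀ z ∈ W i, G.FinitelyBlocked (a i) (b i) z) :
    ∃ F : ∀ i, G.Walk (a i) (b i), ∀ i ∈ s, (F i).IsPath ∧ (∀ e ∈ (F i).edges, e ∉ E₀) ∧
      (∀ z ∈ W i, z ∉ (F i).support) ∧ ∀ j ∈ s, j ≠ i → EdgeDisjW (F i) (F j) := by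
  induction s using Finset.induction_on with
  | empty => exact ⟨fun i => (hG.preconnected (a i) (b i)).some, by simp⟩
  | insert i s hi ih =>
    obtain ⟨F, hF⟩ := ih (fun j hj => hab j (Finset.mem_insert_of_mem hj))
      (fun j hj => hW j (Finset.mem_insert_of_mem hj))
      (fun j hj => hblock j (Finset.mem_insert_of_mem hj))
    have hE₁ : (E₀ ∪ ⋃ j ∈ s, {e | e ∈ (F j).edges}).Finite :=
      hE₀.union (s.finite_toSet.biUnion fun j _ => (F j).edges.finite_toSet)
    obtain ⟨p, hp, hpE, hpW⟩ := hG.exists_path_avoiding (hab i (s.mem_insert_self i)) hE₁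
      (hW i (s.mem_insert_self i)) (hblock i (s.mem_insert_self i))
    have hpF : ∀ j ∈ s, EdgeDisjW p (F j) :=
      fun j hj e he hej => hpE e he (Or.inr (Set.mem_biUnion hj hej))
    have hupd : ∀ j ∈ s, Function.update F i p j = F j :=
      fun j hj => Function.update_of_ne (ne_of_mem_of_not_mem hj hi) _ _
    refine ⟨Function.update F i p, fun j hj => ?_⟩
    rcases Finset.mem_insert.mp hj with rfl | hjs
    · simp only [Function.update_self]
      refine ⟨hp, fun e he he₀ => hpE e he (Or.inl he₀), hpW, fun k hk hkj => ?_⟩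
      rw [hupd k ((Finset.mem_insert.mp hk).resolve_left hkj)]
      exact hpF k ((Finset.mem_insert.mp hk).resolve_left hkj)
    · obtain ⟨hFp, hFE, hFW, hFF⟩ := hF j hjs
      rw [hupd j hjs]
      refine ⟨hFp, hFE, hFW, fun k hk hkj => ?_⟩
      rcases Finset.mem_insert.mp hk with hki | hks
      · rw [hki, Function.update_self]
        exact (hpF j hjs).symm
      · rw [hupd k hks]
        exact hFF k hks hkj

lemma IsCompoundSep.symm {A B : Set V} (h : IsCompoundSep G A B) : IsCompoundSep G B A := by
  obtain ⟨hcov, hA, hB, hfin, hcross⟩ := h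
  refine ⟨Set.union_comm A B ▸ hcov, hB, hA, Set.inter_comm A B ▸ hfin,
    (hcross.image Prod.swap).subset ?_⟩
  rintro ⟨x, y⟩ ⟨hxy, hx, hy⟩
  exact ⟨(y, x), ⟨hxy.symm, hy, hx⟩, rfl⟩

lemma IsUnitaryCSep.symm {A B : Set V} {w : V} (h : IsUnitaryCSep G A B w) :
    IsUnitaryCSep G B A w :=
  ⟨h.1.symm, Set.inter_comm B A ▸ h.2⟩

lemma IsUnitaryCSep.mem_inter {A B : Set V} {w : V} (h : IsUnitaryCSep G A B w) : w ∈ A ∩ B :=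
  h.2 ▸ rfl

def crossEdges (G : SimpleGraph V) (A B : Set V) : Set (Sym2 V) :=
  (fun p : V × V => s(p.1, p.2)) '' {p | G.Adj p.1 p.2 ∧ p.1 ∈ A \ B ∧ p.2 ∈ B \ A}

lemma IsUnitaryCSep.exists_crossEdge {A B : Set V} {w x y : V} (h : IsUnitaryCSep G A B w)
    (q : G.Walk x y) (hx : x ∈ B \ A) (hy : y ∈ A \ B) (hw : w ∉ q.support) :
    ∃ e ∈ q.edges, e ∈ crossEdges G A B := by
  obtain ⟨d, hd, hfst, hsnd⟩ := q.exists_boundary_dart (B \ A) hx (fun hy' => hy'.2 hy.1)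
  have hsndA : d.snd ∈ A \ B := by
    have hmem : d.snd ∈ A ∪ B := h.1.1 ▸ Set.mem_univ _
    have hne : d.snd ∉ A ∩ B := by
      rw [h.2, Set.mem_singleton_iff]
      rintro heq
      exact hw (heq ▸ q.dart_snd_mem_support_of_mem_darts hd)
    grind
  refine ⟨d.edge, List.mem_map_of_mem hd, (d.snd, d.fst), ⟨d.adj.symm, hsndA, hfst⟩, ?_⟩
  exact Sym2.eq_swap

lemma IsUnitaryCSep.finitelyBlocked {A B : Set V} {w u v z : V}
    (h : IsUnitaryCSep G A B w) (hz : z ∈ A \ B) (hu : u ∈ B \ A) (hv : v ∈ B \ A) :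
    G.FinitelyBlocked u v z := by
  classical
  refine ⟨crossEdges G A B, h.1.2.2.2.2.image _, fun p hp hzp => ?_⟩
  by_cases hw : w ∈ (p.takeUntil z hzp).support
  · have hw' : w ∉ (p.dropUntil z hzp).support := fun hw' => by
      have hwz := hp.eq_of_mem_takeUntil_of_mem_dropUntil hzp hw hw'
      exact hz.2 (hwz ▸ h.mem_inter.2)
    obtain ⟨e, he, hC⟩ := h.exists_crossEdge (p.dropUntil z hzp).reverse hv hz (by simpa using hw')
    exact ⟨e, p.edges_dropUntil_subset_edges hzp (by simpa using he), hC⟩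
  · obtain ⟨e, he, hC⟩ := h.exists_crossEdge (p.takeUntil z hzp) hu hz hw
    exact ⟨e, p.edges_takeUntil_subset_edges hzp he, hC⟩

def IsSepChain (G : SimpleGraph V) (sep : ℚ → Set V × Set V) (w : ℚ → V) : Prop :=
  (∀ q, IsUnitaryCSep G (sep q).1 (sep q).2 (w q)) ∧
    ∀ ⦃q r⦄, q < r → w q ∈ (sep r).1 \ (sep r).2 ∧ w r ∈ (sep q).2 \ (sep q).1

lemma exists_isSepChain {S : Set (Set V × Set V)}
    (hS : ∀ s ∈ S, ∃ w, IsUnitaryCSep G s.1 s.2 w)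
    (hdist : ∀ s ∈ S, ∀ t ∈ S, s ≠ t → s.1 ∩ s.2 ≠ t.1 ∩ t.2)
    (f : ↥S ≃ ℚ) (hf : ∀ s t : ↥S, osLE s.val t.val ↔ f s ≤ f t) :
    ∃ sep w, IsSepChain G sep w := by
  choose w hw using fun q => hS _ (f.symm q).2
  have hle : ∀ {q r}, q ≤ r → osLE (f.symm q).1 (f.symm r).1 :=
    fun hqr => (hf _ _).mpr (by simpa using hqr)
  have hinj : ∀ {q r}, w q = w r → q = r := by
    intro q r hqr
    by_contra hne
    refine hdist _ (f.symm q).2 _ (f.symm r).2 (fun h => hne ?_) ?_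
    · simpa using congrArg f (Subtype.ext h)
    · rw [(hw q).2, (hw r).2, hqr]
  refine ⟨fun q => (f.symm q).1, w, hw, fun q r hqr => ⟨⟨(hle hqr.le).1 (hw q).mem_inter.1, ?_⟩,
    ⟨(hle hqr.le).2 (hw r).mem_inter.2, ?_⟩⟩⟩
  · intro hB
    have : w q ∈ {w r} := (hw r).2 ▸ Set.mem_inter ((hle hqr.le).1 (hw q).mem_inter.1) hB
    exact hqr.ne (hinj this)
  · intro hA
    have : w r ∈ {w q} := (hw q).2 ▸ Set.mem_inter hA ((hle hqr.le).2 (hw r).mem_inter.2)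
    exact hqr.ne' (hinj this)

namespace IsSepChain

variable {sep : ℚ → Set V × Set V} {w : ℚ → V}

lemma injective (h : IsSepChain G sep w) : Function.Injective w := by
  intro q r hqr
  by_contra hne
  rcases lt_or_gt_of_ne hne with hlt | hlt
  · exact (h.2 hlt).1.2 (hqr ▸ (h.1 r).mem_inter.2)
  · exact (h.2 hlt).1.2 (hqr ▸ (h.1 q).mem_inter.2)

lemma finitelyBlocked (h : IsSepChain G sep w) {m a b : ℚ}
    (hm : m < a ∧ m < b ∨ a < m ∧ b < m) : G.FinitelyBlocked (w a) (w b) (w m) := by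
  rcases hm with ⟨ha, hb⟩ | ⟨ha, hb⟩
  · obtain ⟨q, hmq, hq⟩ := exists_between (lt_min ha hb)
    exact (h.1 q).finitelyBlocked (h.2 hmq).1 (h.2 (hq.trans_le (min_le_left a b))).2
      (h.2 (hq.trans_le (min_le_right a b))).2
  · obtain ⟨q, hq, hqm⟩ := exists_between (max_lt ha hb)
    exact (h.1 q).symm.finitelyBlocked (h.2 hqm).2 (h.2 ((le_max_left a b).trans_lt hq)).1
      (h.2 ((le_max_right a b).trans_lt hq)).1

end IsSepChain

def dyadic (n k : ℕ) : ℚ := k / 2 ^ n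

def dyadicLevel (n : ℕ) : Set ℚ := dyadic n '' Set.Iic (2 ^ n)

lemma dyadic_strictMono (n : ℕ) : StrictMono (dyadic n) :=
  fun _ _ h => div_lt_div_of_pos_right (by exact_mod_cast h) (by positivity)

lemma dyadic_two_mul (n k : ℕ) : dyadic (n + 1) (2 * k) = dyadic n k := by
  simp only [dyadic, pow_succ]
  push_cast
  field_simp

lemma dyadic_succ (n k : ℕ) : dyadic n (k + 1) = ((k : ℚ) + 1) / 2 ^ n := by
  simp [dyadic]

lemma dyadic_mem_dyadicLevel {n k : ℕ} (hk : k ≤ 2 ^ n) : dyadic n k ∈ dyadicLevel n :=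
  ⟨k, hk, rfl⟩

lemma dyadicLevel_finite (n : ℕ) : (dyadicLevel n).Finite :=
  (Set.finite_Iic _).image _

lemma dyadicLevel_mono : Monotone dyadicLevel := by
  refine monotone_nat_of_le_succ fun n => ?_
  rintro _ ⟨k, hk, rfl⟩
  rw [← dyadic_two_mul]
  exact dyadic_mem_dyadicLevel (by rw [pow_succ]; simp only [Set.mem_Iic] at hk; omega)

lemma dyadic_odd_notMem (n j : ℕ) : dyadic (n + 1) (2 * j + 1) ∉ dyadicLevel n := by
  rintro ⟨k, -, hk⟩
  rw [← dyadic_two_mul] at hk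
  have := (dyadic_strictMono (n + 1)).injective hk
  omega

lemma exists_odd_of_mem_dyadicLevel_succ {n : ℕ} {m : ℚ} (hm : m ∈ dyadicLevel (n + 1))
    (hmn : m ∉ dyadicLevel n) : ∃ j < 2 ^ n, m = dyadic (n + 1) (2 * j + 1) := by
  obtain ⟨k, hk, rfl⟩ := hm
  simp only [Set.mem_Iic, pow_succ] at hk
  obtain ⟨j, rfl | rfl⟩ := Nat.even_or_odd' k
  · exact (hmn (dyadic_two_mul n j ▸ dyadic_mem_dyadicLevel (by omega))).elim
  · exact ⟨j, by omega, rfl⟩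

lemma lt_or_lt_of_mem_dyadicLevel {n k : ℕ} {m : ℚ} (hm : m ∈ dyadicLevel n)
    (h₀ : m ≠ dyadic n k) (h₁ : m ≠ dyadic n (k + 1)) : m < dyadic n k ∨ dyadic n (k + 1) < m := by
  obtain ⟨j, -, rfl⟩ := hm
  have hj₀ : j ≠ k := fun h => h₀ (h ▸ rfl)
  have hj₁ : j ≠ k + 1 := fun h => h₁ (h ▸ rfl)
  rcases Nat.lt_or_gt_of_ne hj₀ with h | h
  · exact Or.inl (dyadic_strictMono n h)
  · exact Or.inr (dyadic_strictMono n (by omega))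

lemma mem_dyadicSet_iff {q : ℚ} : q ∈ DyadicSet ↔ ∃ n, q ∈ dyadicLevel n := by
  constructor
  · rintro ⟨n, k, hk, rfl⟩
    exact ⟨n, k, hk, rfl⟩
  · rintro ⟨n, k, hk, rfl⟩
    exact ⟨n, k, hk, rfl⟩

lemma strictMonoOn_dyadicLevel {n : ℕ} {g : ℚ → ℚ}
    (h : ∀ i < 2 ^ n, g (dyadic n i) < g (dyadic n (i + 1))) :
    StrictMonoOn g (dyadicLevel n) := by
  have hmono : StrictMonoOn (g ∘ dyadic n) (Set.Iic (2 ^ n)) :=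
    strictMonoOn_Iic_of_lt_succ fun i hi => by simpa [Order.succ_eq_add_one] using h i hi
  rintro _ ⟨i, hi, rfl⟩ _ ⟨j, hj, rfl⟩ hij
  exact hmono hi hj ((dyadic_strictMono n).lt_iff_lt.mp hij)

lemma exists_strictMonoOn_extension {n : ℕ} {g : ℚ → ℚ} (hg : StrictMonoOn g (dyadicLevel n))
    {F : Set ℚ} (hF : F.Finite) :
    ∃ g' : ℚ → ℚ, Set.EqOn g' g (dyadicLevel n) ∧ StrictMonoOn g' (dyadicLevel (n + 1)) ∧
      ∀ m ∈ dyadicLevel (n + 1), m ∉ dyadicLevel n → g' m ∉ F := by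
  classical
  have hr : ∀ q, ∃ r, ∀ j < 2 ^ n, q = dyadic (n + 1) (2 * j + 1) →
      r ∈ Set.Ioo (g (dyadic n j)) (g (dyadic n (j + 1))) ∧ r ∉ F := by
    intro q
    by_cases hq : ∃ j < 2 ^ n, q = dyadic (n + 1) (2 * j + 1)
    · obtain ⟨j, hj, rfl⟩ := hq
      have hlt : g (dyadic n j) < g (dyadic n (j + 1)) :=
        hg (dyadic_mem_dyadicLevel (by omega)) (dyadic_mem_dyadicLevel (by omega))
          (dyadic_strictMono n (by omega))
      obtain ⟨r, hr, hrF⟩ := (Set.Ioo_infinite hlt).exists_notMem_finite hF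
      refine ⟨r, fun j' _ hj' => ?_⟩
      obtain rfl : j' = j := by
        have := (dyadic_strictMono (n + 1)).injective hj'
        omega
      exact ⟨hr, hrF⟩
    · exact ⟨0, fun j hj hq' => (hq ⟨j, hj, hq'⟩).elim⟩
  choose r hr using hr
  refine ⟨fun q => if q ∈ dyadicLevel n then g q else r q, fun q hq => if_pos hq, ?_, ?_⟩
  · refine strictMonoOn_dyadicLevel fun i hi => ?_
    rw [pow_succ] at hi
    obtain ⟨j, rfl | rfl⟩ := Nat.even_or_odd' i
    · have hj : j < 2 ^ n := by omega
      simp only [dyadic_two_mul, if_pos (dyadic_mem_dyadicLevel hj.le),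
        if_neg (dyadic_odd_notMem n j)]
      exact (hr _ j hj rfl).1.1
    · have hj : j < 2 ^ n := by omega
      rw [show 2 * j + 1 + 1 = 2 * (j + 1) by ring]
      simp only [dyadic_two_mul, if_pos (dyadic_mem_dyadicLevel (Nat.succ_le_of_lt hj)),
        if_neg (dyadic_odd_notMem n j)]
      exact (hr _ j hj rfl).1.2
  · intro m hm hmn
    obtain ⟨j, hj, rfl⟩ := exists_odd_of_mem_dyadicLevel_succ hm hmn
    simp only [if_neg hmn]
    exact (hr _ j hj rfl).2

lemma finite_setOf_exists_mem_lists {α : Type*} (L : ℕ → ℕ → List α) (n : ℕ) :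
    {x | ∃ l ≤ n, ∃ k < 2 ^ l, x ∈ L l k}.Finite := by
  refine ((Set.finite_Iic n).biUnion fun l _ =>
    (Set.finite_Iio (2 ^ l)).biUnion fun k _ => (L l k).finite_toSet).subset ?_
  rintro x ⟨l, hl, k, hk, hx⟩
  exact Set.mem_biUnion (Set.mem_Iic.mpr hl) (Set.mem_biUnion (Set.mem_Iio.mpr hk) hx)

variable {w : ℚ → V}

/-- Stage `n` of the construction of the immersion: the dyadic `m` of level `n` is placed at
the separator `w (g m)`, and for `l ≤ n` the walk `path l k` realises the edge of the halved
Farey graph between `dyadic l k` and `dyadic l (k + 1)`. -/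
structure Stage (G : SimpleGraph V) (w : ℚ → V) (n : ℕ) where
  g : ℚ → ℚ
  path : ℕ → ℕ → Σ' u v : V, G.Walk u v
  strictMonoOn : StrictMonoOn g (dyadicLevel n)
  fst_path : ∀ l ≤ n, ∀ k < 2 ^ l, (path l k).1 = w (g (dyadic l k))
  snd_path : ∀ l ≤ n, ∀ k < 2 ^ l, (path l k).2.1 = w (g (dyadic l (k + 1)))
  isPath : ∀ l ≤ n, ∀ k < 2 ^ l, (path l k).2.2.IsPath
  edgeDisj : ∀ l ≤ n, ∀ k < 2 ^ l, ∀ l' ≤ n, ∀ k' < 2 ^ l', (l, k) ≠ (l', k') →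
    EdgeDisjW (path l k).2.2 (path l' k').2.2
  notMem_support : ∀ l ≤ n, ∀ k < 2 ^ l, ∀ m ∈ dyadicLevel n, m ≠ dyadic l k →
    m ≠ dyadic l (k + 1) → w (g m) ∉ (path l k).2.2.support

namespace Stage

variable {n : ℕ}

def Extends (s : Stage G w n) (t : Stage G w (n + 1)) : Prop :=
  Set.EqOn t.g s.g (dyadicLevel n) ∧ ∀ l ≤ n, t.path l = s.path l

lemma exists_extends_of (s : Stage G w n) {g' : ℚ → ℚ} (hg'g : Set.EqOn g' s.g (dyadicLevel n))
    (hg' : StrictMonoOn g' (dyadicLevel (n + 1)))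
    (hnew : ∀ m ∈ dyadicLevel (n + 1), m ∉ dyadicLevel n → ∀ l ≤ n, ∀ k < 2 ^ l,
      w (g' m) ∉ (s.path l k).2.2.support)
    (F : ∀ k, G.Walk (w (g' (dyadic (n + 1) k))) (w (g' (dyadic (n + 1) (k + 1)))))
    (hF : ∀ k < 2 ^ (n + 1), (F k).IsPath ∧
      (∀ l ≤ n, ∀ k' < 2 ^ l, EdgeDisjW (F k) (s.path l k').2.2) ∧
      (∀ m ∈ dyadicLevel (n + 1), m ≠ dyadic (n + 1) k → m ≠ dyadic (n + 1) (k + 1) →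
        w (g' m) ∉ (F k).support) ∧
      ∀ k' < 2 ^ (n + 1), k' ≠ k → EdgeDisjW (F k) (F k')) :
    ∃ t : Stage G w (n + 1), s.Extends t := by
  set path' := Function.update s.path (n + 1) fun k => ⟨_, _, F k⟩
  have hold : ∀ l ≤ n, path' l = s.path l := fun l hl => Function.update_of_ne (by omega) _ _
  have hlast : path' (n + 1) = fun k => ⟨_, _, F k⟩ := Function.update_self _ _ _
  have hg'old : ∀ l ≤ n, ∀ j ≤ 2 ^ l, g' (dyadic l j) = s.g (dyadic l j) :=
    fun l hl j hj => hg'g (dyadicLevel_mono hl (dyadic_mem_dyadicLevel hj))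
  refine ⟨⟨g', path', hg', ?_, ?_, ?_, ?_, ?_⟩, hg'g, hold⟩
  · intro l hl k hk
    rcases Nat.of_le_succ hl with hl | rfl
    · rw [hold l hl, s.fst_path l hl k hk, hg'old l hl k hk.le]
    · rw [hlast]
  · intro l hl k hk
    rcases Nat.of_le_succ hl with hl | rfl
    · rw [hold l hl, s.snd_path l hl k hk, hg'old l hl (k + 1) hk]
    · rw [hlast]
  · intro l hl k hk
    rcases Nat.of_le_succ hl with hl | rfl
    · rw [hold l hl]
      exact s.isPath l hl k hk
    · rw [hlast]
      exact (hF k hk).1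
  · intro l hl k hk l' hl' k' hk' hne
    rcases Nat.of_le_succ hl with hl | rfl <;> rcases Nat.of_le_succ hl' with hl' | rfl
    · rw [hold l hl, hold l' hl']
      exact s.edgeDisj l hl k hk l' hl' k' hk' hne
    · rw [hold l hl, hlast]
      exact ((hF k' hk').2.1 l hl k hk).symm
    · rw [hlast, hold l' hl']
      exact (hF k hk).2.1 l' hl' k' hk'
    · rw [hlast]
      exact (hF k hk).2.2.2 k' hk' fun h => hne (h ▸ rfl)
  · intro l hl k hk m hm hm₀ hm₁
    rcases Nat.of_le_succ hl with hl | rfl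
    · rw [hold l hl]
      by_cases hmn : m ∈ dyadicLevel n
      · rw [hg'g hmn]
        exact s.notMem_support l hl k hk m hmn hm₀ hm₁
      · exact hnew m hm hmn l hl k hk
    · rw [hlast]
      exact (hF k hk).2.2.1 m hm hm₀ hm₁

lemma exists_extends (hG : InfEdgeConn G) (hw : Function.Injective w)
    (hblock : ∀ ⦃m a b : ℚ⦄, m < a ∧ m < b ∨ a < m ∧ b < m →
      G.FinitelyBlocked (w a) (w b) (w m))
    (s : Stage G w n) : ∃ t : Stage G w (n + 1), s.Extends t := by
  obtain ⟨g', hg'g, hg', hg'new⟩ := exists_strictMonoOn_extension s.strictMonoOn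
    ((finite_setOf_exists_mem_lists (fun l k => (s.path l k).2.2.support) n).preimage hw.injOn)
  have hends : ∀ k < 2 ^ (n + 1), g' (dyadic (n + 1) k) < g' (dyadic (n + 1) (k + 1)) :=
    fun k hk => hg' (dyadic_mem_dyadicLevel hk.le) (dyadic_mem_dyadicLevel hk)
      (dyadic_strictMono _ k.lt_succ_self)
  obtain ⟨F, hF⟩ := hG.exists_paths_avoiding (Finset.range (2 ^ (n + 1)))
    (a := fun k => w (g' (dyadic (n + 1) k))) (b := fun k => w (g' (dyadic (n + 1) (k + 1))))
    (fun k hk => hw.ne (hends k (Finset.mem_range.mp hk)).ne)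
    (finite_setOf_exists_mem_lists (fun l k => (s.path l k).2.2.edges) n)
    (W := fun k => (fun m => w (g' m)) '' {m ∈ dyadicLevel (n + 1) |
      m ≠ dyadic (n + 1) k ∧ m ≠ dyadic (n + 1) (k + 1)})
    (fun k _ => ((dyadicLevel_finite _).subset (Set.sep_subset _ _)).image _) (by
      rintro k hk _ ⟨m, ⟨hm, hm₀, hm₁⟩, rfl⟩
      have hk := Finset.mem_range.mp hk
      apply hblock
      rcases lt_or_lt_of_mem_dyadicLevel hm hm₀ hm₁ with h | h
      · have h₀ := hg' hm (dyadic_mem_dyadicLevel hk.le) h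
        exact Or.inl ⟨h₀, h₀.trans (hends k hk)⟩
      · have h₁ := hg' (dyadic_mem_dyadicLevel hk) hm h
        exact Or.inr ⟨(hends k hk).trans h₁, h₁⟩)
  refine s.exists_extends_of hg'g hg'
    (fun m hm hmn l hl k hk hx => hg'new m hm hmn ⟨l, hl, k, hk, hx⟩) F fun k hk => ?_
  obtain ⟨hp, hE, hW, hdisj⟩ := hF k (Finset.mem_range.mpr hk)
  exact ⟨hp, fun l hl k' hk' e he he' => hE e he ⟨l, hl, k', hk', he'⟩,
    fun m hm hm₀ hm₁ => hW _ ⟨m, ⟨hm, hm₀, hm₁⟩, rfl⟩,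
    fun k' hk' hne => hdisj k' (Finset.mem_range.mpr hk') hne⟩

lemma nonempty_zero (hG : InfEdgeConn G) (hw : Function.Injective w) :
    Nonempty (Stage G w 0) := by
  obtain ⟨P, hP, -⟩ := hG.2 (w (dyadic 0 0)) (w (dyadic 0 1)) (hw.ne (by simp [dyadic]))
  refine ⟨⟨id, fun _ _ => ⟨_, _, P 0⟩, strictMono_id.strictMonoOn _, ?_, ?_, ?_, ?_, ?_⟩⟩ <;>
    intro l hl k hk <;> obtain rfl : l = 0 := Nat.le_zero.mp hl <;>
    obtain rfl : k = 0 := by simpa using hk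
  · rfl
  · rfl
  · exact hP 0
  · intro l' hl' k' hk' hne
    obtain rfl : l' = 0 := Nat.le_zero.mp hl'
    obtain rfl : k' = 0 := by simpa using hk'
    exact (hne rfl).elim
  · rintro _ ⟨j, hj, rfl⟩ h₀ h₁
    simp only [Set.mem_Iic, pow_zero] at hj
    interval_cases j
    exacts [(h₀ rfl).elim, (h₁ rfl).elim]

lemma exists_extending_seq (hG : InfEdgeConn G) (hw : Function.Injective w)
    (hblock : ∀ ⦃m a b : ℚ⦄, m < a ∧ m < b ∨ a < m ∧ b < m →
      G.FinitelyBlocked (w a) (w b) (w m)) :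
    ∃ st : ∀ n, Stage G w n, ∀ n, (st n).Extends (st (n + 1)) := by
  choose step hstep using fun n (s : Stage G w n) => s.exists_extends hG hw hblock
  obtain ⟨s₀⟩ := nonempty_zero hG hw
  exact ⟨fun n => Nat.rec s₀ step n, fun n => hstep n _⟩

lemma extends_of_le {st : ∀ n, Stage G w n} (hst : ∀ n, (st n).Extends (st (n + 1)))
    {n N : ℕ} (h : n ≤ N) :
    Set.EqOn (st N).g (st n).g (dyadicLevel n) ∧ ∀ l ≤ n, (st N).path l = (st n).path l := by
  induction N, h using Nat.le_induction with
  | base => exact ⟨fun _ _ => rfl, fun _ _ => rfl⟩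
  | succ N hnN ih =>
    exact ⟨fun q hq => ((hst N).1 (dyadicLevel_mono hnN hq)).trans (ih.1 hq),
      fun l hl => ((hst N).2 l (hl.trans hnN)).trans (ih.2 l hl)⟩

end Stage

lemma exists_dyadic_of_halvedFarey_adj {u v : DyadicSet} (h : halvedFarey.Adj u v) :
    ∃ n, ∃ k < 2 ^ n, s(u.1, v.1) = s(dyadic n k, dyadic n (k + 1)) := by
  obtain ⟨-, n, k, hk, ⟨hu, hv⟩ | ⟨hv, hu⟩⟩ := h
  · exact ⟨n, k, hk, by rw [hu, hv, dyadic_succ]; rfl⟩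
  · exact ⟨n, k, hk, by rw [hu, hv, dyadic_succ, Sym2.eq_swap]; rfl⟩

lemma stronglyImmersed_halvedFarey {α : ℚ → V} (hα : Set.InjOn α DyadicSet)
    (P : ℕ → ℕ → Σ' u v : V, G.Walk u v)
    (hfst : ∀ n, ∀ k < 2 ^ n, (P n k).1 = α (dyadic n k))
    (hsnd : ∀ n, ∀ k < 2 ^ n, (P n k).2.1 = α (dyadic n (k + 1)))
    (hpath : ∀ n, ∀ k < 2 ^ n, (P n k).2.2.IsPath)
    (hdisj : ∀ n, ∀ k < 2 ^ n, ∀ n', ∀ k' < 2 ^ n', (n, k) ≠ (n', k') →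
      EdgeDisjW (P n k).2.2 (P n' k').2.2)
    (hsupp : ∀ n, ∀ k < 2 ^ n, ∀ m ∈ DyadicSet, m ≠ dyadic n k → m ≠ dyadic n (k + 1) →
      α m ∉ (P n k).2.2.support) :
    StronglyImmersed halvedFarey G := by
  have key : ∀ ⦃u v : DyadicSet⦄, halvedFarey.Adj u v → ∃ n, ∃ k < 2 ^ n,
      s(u.1, v.1) = s(dyadic n k, dyadic n (k + 1)) ∧ ∃ q : G.Walk (α u) (α v),
        q.IsPath ∧ q.edges ⊆ (P n k).2.2.edges ∧ q.support ⊆ (P n k).2.2.support := by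
    intro u v huv
    obtain ⟨n, k, hk, hnk⟩ := exists_dyadic_of_halvedFarey_adj huv
    have hends : s((P n k).1, (P n k).2.1) = s(α u, α v) := by
      simpa [hfst n k hk, hsnd n k hk] using congrArg (Sym2.map α) hnk.symm
    obtain ⟨q, hq, hqE, hqS⟩ := (P n k).2.2.exists_of_sym2_eq hends
    exact ⟨n, k, hk, hnk, q, hq (hpath n k hk), hqE, hqS⟩
  choose n k hk hnk Q hQ hQE hQS using key
  refine ⟨fun m => α m, Q, fun m m' h => Subtype.ext (hα m.2 m'.2 h), hQ, ?_, ?_⟩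
  · intro u v u' v' h h' hne
    have hnk' : (n h, k h) ≠ (n h', k h') := by
      intro heq
      simp only [Prod.mk.injEq] at heq
      apply hne
      refine Sym2.map.injective Subtype.val_injective ?_
      simp only [Sym2.map_mk, hnk h, hnk h', heq.1, heq.2]
    exact fun e he he' => hdisj _ _ (hk h) _ _ (hk h') hnk' e (hQE h he) (hQE h' he')
  · rintro u v h _ hx ⟨m, rfl⟩
    by_cases hm : m.1 = dyadic (n h) (k h) ∨ m.1 = dyadic (n h) (k h + 1)
    · have hmuv : m.1 ∈ s(u.1, v.1) := by
        rw [hnk h]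
        rcases hm with hm | hm <;> simp [hm]
      rcases Sym2.mem_iff.mp hmuv with hmu | hmv
      · exact Or.inl (congrArg α hmu)
      · exact Or.inr (congrArg α hmv)
    · push Not at hm
      exact (hsupp _ _ (hk h) m m.2 hm.1 hm.2 (hQS h hx)).elim

lemma Stage.stronglyImmersed {st : ∀ n, Stage G w n} (hst : ∀ n, (st n).Extends (st (n + 1)))
    (hw : Function.Injective w) : StronglyImmersed halvedFarey G := by
  have hlv : ∀ q, ∃ n, q ∈ DyadicSet → q ∈ dyadicLevel n := fun q => by
    by_cases hq : q ∈ DyadicSet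
    · obtain ⟨n, hn⟩ := mem_dyadicSet_iff.mp hq
      exact ⟨n, fun _ => hn⟩
    · exact ⟨0, fun h => (hq h).elim⟩
  choose lv hlv using hlv
  set α : ℚ → V := fun q => w ((st (lv q)).g q)
  have hα : ∀ {q N}, q ∈ dyadicLevel N → α q = w ((st N).g q) := fun {q N} hq => by
    have hq' := hlv q (mem_dyadicSet_iff.mpr ⟨N, hq⟩)
    change w ((st (lv q)).g q) = _
    rw [← (extends_of_le hst (le_max_left (lv q) N)).1 hq',
      (extends_of_le hst (le_max_right (lv q) N)).1 hq]
  have hpath : ∀ {n N}, n ≤ N → (st N).path n = (st n).path n :=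
    fun h => (extends_of_le hst h).2 _ le_rfl
  refine stronglyImmersed_halvedFarey (α := α) (P := fun n k => (st n).path n k) ?_
    (fun n k hk => by rw [(st n).fst_path n le_rfl k hk, hα (dyadic_mem_dyadicLevel hk.le)])
    (fun n k hk => by rw [(st n).snd_path n le_rfl k hk, hα (dyadic_mem_dyadicLevel hk)])
    (fun n k hk => (st n).isPath n le_rfl k hk) ?_ ?_
  · intro q hq q' hq' h
    have hqM := dyadicLevel_mono (le_max_left (lv q) (lv q')) (hlv q hq)
    have hqM' := dyadicLevel_mono (le_max_right (lv q) (lv q')) (hlv q' hq')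
    rw [hα hqM, hα hqM'] at h
    exact (st _).strictMonoOn.injOn hqM hqM' (hw h)
  · intro n k hk n' k' hk' hne
    have := (st (max n n')).edgeDisj n (le_max_left n n') k hk n' (le_max_right n n') k' hk' hne
    rwa [hpath (le_max_left n n'), hpath (le_max_right n n')] at this
  · intro n k hk m hm hm₀ hm₁
    have hmM := dyadicLevel_mono (le_max_right n (lv m)) (hlv m hm)
    have := (st (max n (lv m))).notMem_support n (le_max_left n (lv m)) k hk m hmM hm₀ hm₁
    rwa [hpath (le_max_left n (lv m)), ← hα hmM] at this

end

/-- if an infinitely edge-connected graph has a set of oriented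
unitary compound-separations with pairwise distinct separators which is ordered
like `ℚ`, then the halved Farey graph is strongly immersed in it. -/
theorem halvedFarey_of_Q_ordered_seps {V : Type*} (G : SimpleGraph V)
    (hG : InfEdgeConn G) (S : Set (Set V × Set V))
    (hS : ∀ s ∈ S, ∃ w, IsUnitaryCSep G s.1 s.2 w)
    (hdist : ∀ s ∈ S, ∀ t ∈ S, s ≠ t → s.1 ∩ s.2 ≠ t.1 ∩ t.2)
    (f : ↥S ≃ ℚ)
    (hf : ∀ s t : ↥S, osLE s.val t.val ↔ f s ≤ f t) :
    StronglyImmersed halvedFarey G := by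
  obtain ⟨sep, w, hchain⟩ := exists_isSepChain hS hdist f hf
  obtain ⟨st, hst⟩ := Stage.exists_extending_seq hG hchain.injective fun _ _ _ h => hchain.finitelyBlocked h
  exact Stage.stronglyImmersed hst hchain.injective
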